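/- For every ε ∈ (0,1) there exists a constant C > 0 (depending only on ε) such that for all (ℓ,m) ∈ I with 0 < m ≤ εℓ and all x ∈ [−1,1], writing y = (1−x²)^{1/2}, one has |Y_{ℓ,m}(x)| ≤ C b_{ℓ,m}^{−(m+1/2)} (y e)^m. -/

import Mathlib

open Real Set

/-- Jacobi polynomial `P_j^{(α,α)}` via Rodrigues' formula. -/
noncomputable def jacobiP (j : ℕ) (α : ℝ) (x : ℝ) : ℝ :=
  ((-1 : ℝ) ^ j / (2 ^ j * (Nat.factorial j : ℝ))) * (1 - x ^ 2) ^ (-α) *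
    iteratedDeriv j (fun t : ℝ => (1 - t ^ 2) ^ (α + (j : ℝ))) x

/-- The normalization constant `c_{ℓm}`. -/
noncomputable def cConst (ℓ m : ℝ) : ℝ :=
  Real.sqrt (ℓ * Real.Gamma (ℓ - m + 1/2) * Real.Gamma (ℓ + m + 1/2)) /
    ((2 : ℝ) ^ m * Real.Gamma (ℓ + 1/2))

/-- The function `Y_{ℓ,m}`. -/
noncomputable def Yfun (ℓ m x : ℝ) : ℝ :=
  cConst ℓ m * (1 - x ^ 2) ^ (m / 2) * jacobiP ⌊ℓ - m - 1/2⌋₊ m x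

/-- Membership in the index set `I = {(ℓ,m) ∈ (ℕ/2)² : ℓ - m - 1/2 ∈ ℕ}`. -/
def memI (ℓ m : ℝ) : Prop :=
  (∃ n : ℕ, m = (n : ℝ) / 2) ∧ (∃ j : ℕ, ℓ - m - 1/2 = (j : ℝ))

/-- `b_{ℓ,m} = m / ℓ`. -/
noncomputable def bPt (ℓ m : ℝ) : ℝ := m / ℓ

/-- `a_{ℓ,m} = (1 - b_{ℓ,m}²)^{1/2}`. -/
noncomputable def aPt (ℓ m : ℝ) : ℝ := Real.sqrt (1 - bPt ℓ m ^ 2)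

/-- Membership in `ℕ_k = ℕ + (k-1)/2`. -/
def memNk (k : ℕ) (t : ℝ) : Prop := ∃ n : ℕ, t = (n : ℝ) + ((k : ℝ) - 1) / 2

/-- Membership in `I_d`. -/
def memId (d : ℕ) (ℓ m : ℝ) : Prop := memNk d ℓ ∧ memNk (d - 1) m ∧ m ≤ ℓ

/-- The function `X̃^d_{ℓ,m}`. -/
noncomputable def Xtilde (d : ℕ) (ℓ m x : ℝ) : ℝ :=
  (1 - x ^ 2) ^ (-((d : ℝ) - 2) / 4) * Yfun ℓ m x

/-!
On `(-1, 1)`, Rodrigues' formula and Leibniz's rule turn `P_j^{(α,α)}` into the explicit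
polynomial `jacobiExpansion α j`, which satisfies the Jacobi equation
`(1 - x²) y'' - 2 (α + 1) x y' + j (j + 2α + 1) y = 0` (differentiate `(1 - x²) u' = -2 p x u`,
`u = (1 - x²)ᵖ`, repeatedly). Sonin's function `j (j + 2α + 1) y² + (1 - x²) y'²` has derivative
`(4α + 2) x y'²`, so for `α ≥ -1/2` it is largest at `±1`, whence
`|P_j^{(α,α)}| ≤ P_j^{(α,α)}(1) = (α + 1)_j / j!`.

For `(ℓ, m) ∈ I` write `n = 2m`, `j = ℓ - m - 1/2`; the Gamma factors of `c_{ℓm}` then collapse to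
`c_{ℓm} (m + 1)_j / j! = (ℓ (j + n)! / j!)^{1/2} / (2ᵐ Γ(m + 1))`, and `(j + n)! / j! ≤ (j + n)ⁿ`
with `j + n ≤ (1 + ε) ℓ`. What is left is `mᵐ ≤ eᵐ Γ(m + 1)` and the boundedness of
`√m ((1 + ε)/2)ᵐ`.
-/

open Finset in
noncomputable def jacobiExpansion (α : ℝ) (j : ℕ) (x : ℝ) : ℝ :=
  (∑ i ∈ range (j + 1), (j.choose i : ℝ) * (descPochhammer ℝ i).eval (α + j) *
    (descPochhammer ℝ (j - i)).eval (α + j) * (x - 1) ^ (j - i) * (x + 1) ^ i) /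
    (2 ^ j * j.factorial)

lemma iteratedDeriv_rpow_const (p x : ℝ) (k : ℕ) :
    iteratedDeriv k (fun t : ℝ => t ^ p) x = (descPochhammer ℝ k).eval p * x ^ (p - k) := by
  rw [iteratedDeriv_eq_iterate, iter_deriv_rpow_const]

lemma iteratedDeriv_one_sub_rpow (p x : ℝ) (k : ℕ) :
    iteratedDeriv k (fun t : ℝ => (1 - t) ^ p) x =
      (-1) ^ k * (descPochhammer ℝ k).eval p * (1 - x) ^ (p - k) := by
  rw [iteratedDeriv_comp_const_sub k (fun t : ℝ => t ^ p)]
  simp only [smul_eq_mul, iteratedDeriv_rpow_const, mul_assoc]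

lemma iteratedDeriv_one_add_rpow (p x : ℝ) (k : ℕ) :
    iteratedDeriv k (fun t : ℝ => (1 + t) ^ p) x =
      (descPochhammer ℝ k).eval p * (1 + x) ^ (p - k) := by
  rw [iteratedDeriv_comp_const_add k (fun t : ℝ => t ^ p)]
  exact iteratedDeriv_rpow_const p (1 + x) k

lemma one_sub_sq_rpow_eventuallyEq (p : ℝ) {x : ℝ} (hx : x ∈ Ioo (-1 : ℝ) 1) :
    (fun t : ℝ => (1 - t ^ 2) ^ p) =ᶠ[nhds x] fun t => (1 - t) ^ p * (1 + t) ^ p := by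
  filter_upwards [isOpen_Ioo.mem_nhds hx] with t ht
  rw [← mul_rpow (by linarith [ht.2]) (by linarith [ht.1])]
  ring_nf

open Finset in
lemma iteratedDeriv_one_sub_sq_rpow (p : ℝ) (k : ℕ) {x : ℝ} (hx : x ∈ Ioo (-1 : ℝ) 1) :
    iteratedDeriv k (fun t : ℝ => (1 - t ^ 2) ^ p) x =
      ∑ i ∈ range (k + 1), (k.choose i : ℝ) * ((-1) ^ i * (descPochhammer ℝ i).eval p *
        (1 - x) ^ (p - i)) * ((descPochhammer ℝ (k - i)).eval p * (1 + x) ^ (p - (k - i : ℕ))) := by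
  have h1 : 1 - x ≠ 0 := by linarith [hx.2]
  have h2 : 1 + x ≠ 0 := by linarith [hx.1]
  rw [(one_sub_sq_rpow_eventuallyEq p hx).iteratedDeriv_eq, iteratedDeriv_fun_mul
    (n := k) ((contDiffAt_const.sub contDiffAt_fun_id).rpow_const_of_ne h1)
    ((contDiffAt_const.add contDiffAt_fun_id).rpow_const_of_ne h2)]
  simp only [iteratedDeriv_one_sub_rpow, iteratedDeriv_one_add_rpow]

lemma jacobiP_eq_jacobiExpansion (α : ℝ) (j : ℕ) {x : ℝ} (hx : x ∈ Ioo (-1 : ℝ) 1) :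
    jacobiP j α x = jacobiExpansion α j x := by
  have h1 : 0 < 1 - x := by linarith [hx.2]
  have h2 : 0 < 1 + x := by linarith [hx.1]
  rw [jacobiP, iteratedDeriv_one_sub_sq_rpow _ _ hx, jacobiExpansion, Finset.mul_sum,
    Finset.sum_div]
  refine Finset.sum_congr rfl fun i hi => ?_
  have hij : i ≤ j := Nat.lt_succ_iff.mp (Finset.mem_range.mp hi)
  have e1 : (1 - x) ^ (-α) * (1 - x) ^ (α + j - i) = (1 - x) ^ (j - i) := by
    rw [← rpow_add h1, ← rpow_natCast, Nat.cast_sub hij]; ring_nf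
  have e2 : (1 + x) ^ (-α) * (1 + x) ^ (α + j - (j - i : ℕ)) = (x + 1) ^ i := by
    rw [add_comm x, ← rpow_add h2, ← rpow_natCast, Nat.cast_sub hij]; ring_nf
  have esign : (-1 : ℝ) ^ j * (-1) ^ i * (1 - x) ^ (j - i) = (x - 1) ^ (j - i) := by
    rw [← pow_add, show j + i = (j - i) + 2 * i by omega, pow_add, pow_mul]
    rw [show (x - 1) = -1 * (1 - x) by ring, mul_pow]; norm_num
  rw [show (1 : ℝ) - x ^ 2 = (1 - x) * (1 + x) by ring, mul_rpow h1.le h2.le]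
  rw [← esign, ← e1, ← e2]
  ring

lemma ContDiffOn.hasDerivAt_iteratedDeriv {f : ℝ → ℝ} {s : Set ℝ} {k : ℕ}
    (hf : ContDiffOn ℝ (k + 1) f s) (hs : IsOpen s) {x : ℝ} (hx : x ∈ s) :
    HasDerivAt (iteratedDeriv k f) (iteratedDeriv (k + 1) f x) x := by
  have hdiff : DifferentiableOn ℝ (iteratedDeriv k f) s :=
    (hf.differentiableOn_iteratedDerivWithin (by exact_mod_cast k.lt_succ_self)
      hs.uniqueDiffOn).congr fun y hy => (iteratedDerivWithin_of_isOpen hs hy).symm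
  rw [iteratedDeriv_succ]
  exact (hdiff.differentiableAt (hs.mem_nhds hx)).hasDerivAt

lemma HasDerivAt.eq_zero_of_eqOn_zero {g : ℝ → ℝ} {g' x : ℝ} {s : Set ℝ}
    (h : HasDerivAt g g' x) (hs : IsOpen s) (hx : x ∈ s) (hg : ∀ y ∈ s, g y = 0) : g' = 0 :=
  h.unique <| (hasDerivAt_const x 0).congr_of_eventuallyEq <|
    Filter.eventually_of_mem (hs.mem_nhds hx) hg

lemma rpow_eq_rpow_sub_one_mul {x : ℝ} (hx : x ≠ 0) (y : ℝ) : x ^ y = x ^ (y - 1) * x := by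
  rw [← rpow_add_one hx, sub_add_cancel]

lemma hasDerivAt_one_sub_sq (x : ℝ) : HasDerivAt (fun t : ℝ => 1 - t ^ 2) (-2 * x) x := by
  simpa using (hasDerivAt_pow 2 x).const_sub 1

lemma contDiffOn_one_sub_sq_rpow (p : ℝ) (n : ℕ∞) :
    ContDiffOn ℝ n (fun t : ℝ => (1 - t ^ 2) ^ p) (Ioo (-1) 1) :=
  (contDiffOn_const.sub (contDiffOn_fun_id.pow 2)).rpow_const_of_ne fun y hy => by
    nlinarith [hy.1, hy.2]

lemma hasDerivAt_one_sub_sq_rpow (p : ℝ) {x : ℝ} (hx : x ∈ Ioo (-1 : ℝ) 1) :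
    HasDerivAt (fun t : ℝ => (1 - t ^ 2) ^ p) (p * (1 - x ^ 2) ^ (p - 1) * (-2 * x)) x := by
  have hpos : 0 < 1 - x ^ 2 := by nlinarith [hx.1, hx.2]
  convert (hasDerivAt_one_sub_sq x).rpow_const (p := p) (Or.inl hpos.ne') using 1
  ring

lemma hasDerivAt_iteratedDeriv_one_sub_sq_rpow (p : ℝ) (k : ℕ) {x : ℝ}
    (hx : x ∈ Ioo (-1 : ℝ) 1) :
    HasDerivAt (iteratedDeriv k fun t : ℝ => (1 - t ^ 2) ^ p)
      (iteratedDeriv (k + 1) (fun t : ℝ => (1 - t ^ 2) ^ p) x) x :=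
  (contDiffOn_one_sub_sq_rpow p (k + 1)).hasDerivAt_iteratedDeriv isOpen_Ioo hx

/-- Differentiating `(1 - t²) u' + 2 p t u = 0`, `u = (1 - t²)ᵖ`, `n + 1` times. -/
lemma iteratedDeriv_one_sub_sq_rpow_recurrence (p : ℝ) (n : ℕ) {x : ℝ}
    (hx : x ∈ Ioo (-1 : ℝ) 1) :
    (1 - x ^ 2) * iteratedDeriv (n + 2) (fun t : ℝ => (1 - t ^ 2) ^ p) x +
      2 * (p - n - 1) * x * iteratedDeriv (n + 1) (fun t : ℝ => (1 - t ^ 2) ^ p) x +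
      (n + 1) * (2 * p - n) * iteratedDeriv n (fun t : ℝ => (1 - t ^ 2) ^ p) x = 0 := by
  set D := fun k => iteratedDeriv k fun t : ℝ => (1 - t ^ 2) ^ p
  have hD : ∀ k, ∀ y ∈ Ioo (-1 : ℝ) 1, HasDerivAt (D k) (D (k + 1) y) y :=
    fun k y hy => hasDerivAt_iteratedDeriv_one_sub_sq_rpow p k hy
  induction n generalizing x with
  | zero =>
    have hfirst : ∀ y ∈ Ioo (-1 : ℝ) 1, (1 - y ^ 2) * D 1 y + 2 * p * y * D 0 y = 0 := by
      intro y hy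
      have hpos : 0 < 1 - y ^ 2 := by nlinarith [hy.1, hy.2]
      simp only [D, iteratedDeriv_one, iteratedDeriv_zero,
        (hasDerivAt_one_sub_sq_rpow p hy).deriv]
      rw [rpow_eq_rpow_sub_one_mul hpos.ne' p]
      ring
    have := (((hasDerivAt_one_sub_sq x).mul (hD 1 x hx)).add
      (((hasDerivAt_id x).const_mul (2 * p)).mul (hD 0 x hx))).eq_zero_of_eqOn_zero
      isOpen_Ioo hx hfirst
    simp only [id] at this
    push_cast
    linear_combination this
  | succ n ih =>
    have := ((((hasDerivAt_one_sub_sq x).mul (hD (n + 2) x hx)).add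
      (((hasDerivAt_id x).const_mul (2 * (p - n - 1))).mul (hD (n + 1) x hx))).add
      ((hD n x hx).const_mul ((n + 1) * (2 * p - n)))).eq_zero_of_eqOn_zero isOpen_Ioo hx
      fun y hy => ih hy
    simp only [id] at this
    push_cast
    linear_combination this

lemma contDiff_jacobiExpansion (α : ℝ) (j : ℕ) (n : WithTop ℕ∞) :
    ContDiff ℝ n (jacobiExpansion α j) := by
  unfold jacobiExpansion
  fun_prop

lemma differentiable_jacobiExpansion (α : ℝ) (j : ℕ) :
    Differentiable ℝ (jacobiExpansion α j) :=
  (contDiff_jacobiExpansion α j 1).differentiable one_ne_zero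

lemma differentiable_deriv_jacobiExpansion (α : ℝ) (j : ℕ) :
    Differentiable ℝ (deriv (jacobiExpansion α j)) :=
  (contDiff_succ_iff_deriv.mp (contDiff_jacobiExpansion α j (1 + 1))).2.2.differentiable
    one_ne_zero

lemma iteratedDeriv_eq_jacobiExpansion (α : ℝ) (j : ℕ) {x : ℝ} (hx : x ∈ Ioo (-1 : ℝ) 1) :
    iteratedDeriv j (fun t : ℝ => (1 - t ^ 2) ^ (α + j)) x =
      (-1) ^ j * 2 ^ j * j.factorial * ((1 - x ^ 2) ^ α * jacobiExpansion α j x) := by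
  have hpos : 0 < 1 - x ^ 2 := by nlinarith [hx.1, hx.2]
  rw [← jacobiP_eq_jacobiExpansion α j hx, jacobiP, rpow_neg hpos.le]
  have : ((-1 : ℝ) ^ j) ^ 2 = 1 := by rw [← pow_mul, mul_comm, pow_mul]; norm_num
  field_simp
  rw [this, mul_one]

lemma iteratedDeriv_succ_eq_jacobiExpansion (α : ℝ) (j : ℕ) {x : ℝ}
    (hx : x ∈ Ioo (-1 : ℝ) 1) :
    iteratedDeriv (j + 1) (fun t : ℝ => (1 - t ^ 2) ^ (α + j)) x =
      (-1) ^ j * 2 ^ j * j.factorial * ((1 - x ^ 2) ^ (α - 1) *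
        ((1 - x ^ 2) * deriv (jacobiExpansion α j) x - 2 * α * x * jacobiExpansion α j x)) := by
  have hpos : 0 < 1 - x ^ 2 := by nlinarith [hx.1, hx.2]
  have h := ((hasDerivAt_iteratedDeriv_one_sub_sq_rpow (α + j) j hx).sub
    (((hasDerivAt_one_sub_sq_rpow α hx).mul
      (differentiable_jacobiExpansion α j x).hasDerivAt).const_mul _)).eq_zero_of_eqOn_zero
    isOpen_Ioo hx fun y hy => sub_eq_zero.mpr (iteratedDeriv_eq_jacobiExpansion α j hy)
  rw [rpow_eq_rpow_sub_one_mul hpos.ne' α] at h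
  linear_combination h

/-- With `D k = (d/dt)ᵏ (1 - t²)^(α + j)`, `κ = (-1)ʲ 2ʲ j!` and `R = (1 - t²) Q' - 2αtQ`:
differentiating `(1 - t²) D (j + 1) = κ (1 - t²)^α R` and inserting it into the recurrence leaves
`κ (1 - t²)^(α + 1)` times the Jacobi equation. -/
lemma jacobiExpansion_ode (α : ℝ) (j : ℕ) {x : ℝ} (hx : x ∈ Ioo (-1 : ℝ) 1) :
    (1 - x ^ 2) * deriv (deriv (jacobiExpansion α j)) x -
      2 * (α + 1) * x * deriv (jacobiExpansion α j) x +
      j * (j + 2 * α + 1) * jacobiExpansion α j x = 0 := by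
  set Q := jacobiExpansion α j
  set κ : ℝ := (-1) ^ j * 2 ^ j * j.factorial
  set R : ℝ → ℝ := fun y => (1 - y ^ 2) * deriv Q y - 2 * α * y * Q y
  have hpos : 0 < 1 - x ^ 2 := by nlinarith [hx.1, hx.2]
  have hR : HasDerivAt R (-2 * x * deriv Q x + (1 - x ^ 2) * deriv (deriv Q) x -
      (2 * α * Q x + 2 * α * x * deriv Q x)) x :=
    ((hasDerivAt_one_sub_sq x).fun_mul (differentiable_deriv_jacobiExpansion α j x).hasDerivAt
      |>.fun_sub (((hasDerivAt_id' x).const_mul (2 * α)).fun_mul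
        (differentiable_jacobiExpansion α j x).hasDerivAt)).congr_deriv (by ring)
  have hC := (((hasDerivAt_one_sub_sq x).fun_mul
    (hasDerivAt_iteratedDeriv_one_sub_sq_rpow (α + j) (j + 1) hx)).fun_sub
    (((hasDerivAt_one_sub_sq_rpow α hx).fun_mul hR).const_mul κ)).eq_zero_of_eqOn_zero
    isOpen_Ioo hx fun y hy => by
      have hposy : 0 < 1 - y ^ 2 := by nlinarith [hy.1, hy.2]
      rw [iteratedDeriv_succ_eq_jacobiExpansion α j hy, rpow_eq_rpow_sub_one_mul hposy.ne' α]
      ring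
  have hK := iteratedDeriv_one_sub_sq_rpow_recurrence (α + j) j hx
  have hA := iteratedDeriv_eq_jacobiExpansion α j hx
  have hB := iteratedDeriv_succ_eq_jacobiExpansion α j hx
  set v := (1 - x ^ 2) ^ (α - 1)
  rw [rpow_eq_rpow_sub_one_mul hpos.ne' α] at hC hA
  have hκ : κ ≠ 0 := by positivity
  have hv : v ≠ 0 := (rpow_pos_of_pos hpos _).ne'
  have key : κ * v * (1 - x ^ 2) ^ 2 * ((1 - x ^ 2) * deriv (deriv Q) x -
      2 * (α + 1) * x * deriv Q x + j * (j + 2 * α + 1) * Q x) = 0 := by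
    linear_combination (1 - x ^ 2) * hK - (1 - x ^ 2) * hC - 2 * α * x * (1 - x ^ 2) * hB -
      (j + 1) * (2 * α + j) * (1 - x ^ 2) * hA
  simpa [hκ, hv, hpos.ne'] using key

lemma abs_le_of_jacobi_ode {Q : ℝ → ℝ} {α ν B : ℝ} (hα : -1 / 2 ≤ α) (hν : 0 < ν)
    (hQ : Differentiable ℝ Q) (hQ' : Differentiable ℝ (deriv Q))
    (hode : ∀ x ∈ Ioo (-1 : ℝ) 1,
      (1 - x ^ 2) * deriv (deriv Q) x - 2 * (α + 1) * x * deriv Q x + ν * Q x = 0)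
    (h1 : |Q 1| ≤ B) (hm1 : |Q (-1)| ≤ B) {x : ℝ} (hx : x ∈ Icc (-1 : ℝ) 1) : |Q x| ≤ B := by
  set f := fun y => ν * Q y ^ 2 + (1 - y ^ 2) * deriv Q y ^ 2
  have hf : ∀ y ∈ Ioo (-1 : ℝ) 1, HasDerivAt f ((4 * α + 2) * y * deriv Q y ^ 2) y := by
    intro y hy
    refine ((((hQ y).hasDerivAt.fun_pow 2).const_mul ν).fun_add
      (((hasDerivAt_pow 2 y).const_sub 1).fun_mul ((hQ' y).hasDerivAt.fun_pow 2))).congr_deriv ?_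
    linear_combination (2 * deriv Q y) * hode y hy
  have hfc : Continuous f := by
    have := hQ.continuous
    have := hQ'.continuous
    fun_prop
  have hmono : MonotoneOn f (Icc 0 1) := by
    refine monotoneOn_of_hasDerivWithinAt_nonneg (convex_Icc 0 1)
      (f' := fun y => (4 * α + 2) * y * deriv Q y ^ 2) hfc.continuousOn
      (fun y hy => ?_) fun y hy => ?_ <;> rw [interior_Icc] at hy
    · exact (hf y ⟨by linarith [hy.1], hy.2⟩).hasDerivWithinAt
    · have : 0 ≤ 4 * α + 2 := by linarith
      have := hy.1.le
      positivity
  have hanti : AntitoneOn f (Icc (-1) 0) := by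
    refine antitoneOn_of_hasDerivWithinAt_nonpos (convex_Icc (-1) 0)
      (f' := fun y => (4 * α + 2) * y * deriv Q y ^ 2) hfc.continuousOn
      (fun y hy => ?_) fun y hy => ?_ <;> rw [interior_Icc] at hy
    · exact (hf y ⟨hy.1, by linarith [hy.2]⟩).hasDerivWithinAt
    · exact mul_nonpos_of_nonpos_of_nonneg
        (mul_nonpos_of_nonneg_of_nonpos (by linarith) hy.2.le) (sq_nonneg _)
  have hend : ∀ y, y ^ 2 = 1 → |Q y| ≤ B → f y ≤ ν * B ^ 2 := fun y hy hQy => by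
    simp only [f, hy, sub_self, zero_mul, add_zero]
    exact mul_le_mul_of_nonneg_left (sq_le_sq' (abs_le.mp hQy).1 (abs_le.mp hQy).2) hν.le
  have hfx : f x ≤ ν * B ^ 2 := by
    rcases le_total 0 x with h0 | h0
    · exact (hmono ⟨h0, hx.2⟩ ⟨zero_le_one, le_rfl⟩ hx.2).trans (hend 1 (by norm_num) h1)
    · exact (hanti ⟨le_rfl, by norm_num⟩ ⟨hx.1, h0⟩ hx.1).trans (hend (-1) (by norm_num) hm1)
  have hx2 : 0 ≤ (1 - x ^ 2) * deriv Q x ^ 2 := by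
    have : 0 ≤ 1 - x ^ 2 := by nlinarith [hx.1, hx.2]
    positivity
  refine abs_le_of_sq_le_sq ?_ ((abs_nonneg _).trans h1)
  exact le_of_mul_le_mul_left (by linarith [hfx]) hν

lemma descPochhammer_eval_add_self (α : ℝ) (j : ℕ) :
    (descPochhammer ℝ j).eval (α + j) = (ascPochhammer ℝ j).eval (α + 1) := by
  rw [descPochhammer_eval_eq_ascPochhammer]
  ring_nf

lemma jacobiExpansion_one (α : ℝ) (j : ℕ) :
    jacobiExpansion α j 1 = (ascPochhammer ℝ j).eval (α + 1) / j.factorial := by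
  rw [jacobiExpansion, Finset.sum_eq_single_of_mem j (Finset.self_mem_range_succ j)
    fun i hi hij => by simp [Nat.sub_ne_zero_of_lt (lt_of_le_of_ne
      (Nat.lt_succ_iff.mp (Finset.mem_range.mp hi)) hij)]]
  simp only [Nat.choose_self, Nat.sub_self, descPochhammer_zero, descPochhammer_eval_add_self]
  field_simp
  norm_num

lemma jacobiExpansion_neg_one (α : ℝ) (j : ℕ) :
    jacobiExpansion α j (-1) = (-1) ^ j * (ascPochhammer ℝ j).eval (α + 1) / j.factorial := by
  rw [jacobiExpansion, Finset.sum_eq_single_of_mem 0 (by simp)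
    fun i _ hi0 => by simp [hi0]]
  simp only [Nat.choose_zero_right, Nat.sub_zero, descPochhammer_zero, descPochhammer_eval_add_self]
  rw [show (-1 - 1 : ℝ) = -1 * 2 by norm_num, mul_pow]
  field_simp
  norm_num

lemma abs_jacobiP_le {α : ℝ} (hα : -1 / 2 ≤ α) (j : ℕ) {x : ℝ} (hx : x ∈ Ioo (-1 : ℝ) 1) :
    |jacobiP j α x| ≤ (ascPochhammer ℝ j).eval (α + 1) / j.factorial := by
  have hB : 0 ≤ (ascPochhammer ℝ j).eval (α + 1) / j.factorial :=
    div_nonneg (ascPochhammer_pos j _ (by linarith)).le (Nat.cast_nonneg _)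
  rw [jacobiP_eq_jacobiExpansion α j hx]
  rcases Nat.eq_zero_or_pos j with rfl | hj
  · simp [jacobiExpansion]
  have hj' : (1 : ℝ) ≤ j := by exact_mod_cast hj
  refine abs_le_of_jacobi_ode hα (ν := j * (j + 2 * α + 1)) (by nlinarith)
    (differentiable_jacobiExpansion α j) (differentiable_deriv_jacobiExpansion α j)
    (fun y hy => jacobiExpansion_ode α j hy) ?_ ?_ (Ioo_subset_Icc_self hx)
  · rw [jacobiExpansion_one, abs_of_nonneg hB]
  · rw [jacobiExpansion_neg_one, mul_div_assoc, abs_mul, abs_pow, abs_neg, abs_one, one_pow,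
      one_mul, abs_of_nonneg hB]

lemma Gamma_add_nat (b : ℝ) (hb : 0 < b) (k : ℕ) :
    Gamma (b + k) = Gamma b * (ascPochhammer ℝ k).eval b := by
  induction k with
  | zero => simp
  | succ k ih =>
    rw [Nat.cast_succ, ← add_assoc, Gamma_add_one (by positivity), ih, ascPochhammer_succ_eval]
    ring

lemma add_one_rpow_le_exp_one_mul_rpow_self {x : ℝ} (hx : 0 ≤ x) :
    (x + 1) ^ x ≤ exp 1 * x ^ x := by
  rcases hx.eq_or_lt with rfl | hx
  · simp
  calc (x + 1) ^ x = (1 / x + 1) ^ x * x ^ x := by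
        rw [← mul_rpow (by positivity) hx.le]
        congr 1
        field_simp
        ring
    _ ≤ exp (1 / x) ^ x * x ^ x := by
        gcongr
        exact add_one_le_exp _
    _ = exp 1 * x ^ x := by rw [← exp_mul, one_div_mul_cancel hx.ne']

lemma rpow_self_le_exp_mul_Gamma_add_one_succ {x : ℝ} (hx : 0 ≤ x)
    (h : x ^ x ≤ exp x * Gamma (x + 1)) :
    (x + 1) ^ (x + 1) ≤ exp (x + 1) * Gamma (x + 1 + 1) := by
  calc (x + 1) ^ (x + 1) = (x + 1) ^ x * (x + 1) := rpow_add_one (by positivity) x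
    _ ≤ exp 1 * (exp x * Gamma (x + 1)) * (x + 1) := by
        gcongr
        exact (add_one_rpow_le_exp_one_mul_rpow_self hx).trans (by gcongr)
    _ = exp (x + 1) * Gamma (x + 1 + 1) := by
        rw [Gamma_add_one (s := x + 1) (by positivity), exp_add]
        ring

lemma half_rpow_self_le_exp_mul_Gamma (n : ℕ) :
    ((n : ℝ) / 2) ^ ((n : ℝ) / 2) ≤ exp ((n : ℝ) / 2) * Gamma ((n : ℝ) / 2 + 1) := by
  induction n using Nat.twoStepInduction with
  | zero => simp
  | one =>
    have hγ : Gamma ((1 : ℝ) / 2 + 1) = √π / 2 := by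
      rw [Gamma_add_one (by norm_num), Gamma_one_half_eq]
      ring
    have hπ : (3 : ℝ) / 2 ≤ √π := by
      rw [le_sqrt (by norm_num) (by positivity)]
      nlinarith [pi_gt_three]
    have he : (3 : ℝ) / 2 ≤ exp (1 / 2) := by linarith [add_one_le_exp ((1 : ℝ) / 2)]
    have hhalf : ((1 : ℝ) / 2) ^ ((1 : ℝ) / 2) ≤ 1 := rpow_le_one (by norm_num) (by norm_num)
      (by norm_num)
    push_cast
    rw [hγ]
    nlinarith
  | more n ih _ =>
    rw [show ((n + 2 : ℕ) : ℝ) / 2 = n / 2 + 1 by push_cast; ring]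
    exact rpow_self_le_exp_mul_Gamma_add_one_succ (by positivity) ih

lemma exists_rpow_half_mul_rpow_le {q : ℝ} (hq0 : 0 < q) (hq1 : q < 1) :
    ∃ C, 0 < C ∧ ∀ m : ℝ, 0 ≤ m → m ^ (1 / 2 : ℝ) * q ^ m ≤ C := by
  set a := -log q
  have ha : 0 < a := neg_pos.mpr (log_neg hq0 hq1)
  refine ⟨1 + 1 / a, by positivity, fun m hm => ?_⟩
  have hsqrt : m ^ (1 / 2 : ℝ) ≤ (1 + 1 / a) * exp (a * m) := by
    rw [← sqrt_eq_rpow, sqrt_le_iff]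
    refine ⟨by positivity, ?_⟩
    have h1 : 1 + a * m ≤ exp (a * m) := by linarith [add_one_le_exp (a * m)]
    have h2 : 1 + m ≤ (1 + 1 / a) * (1 + a * m) := by
      field_simp
      nlinarith [mul_nonneg hm (sq_nonneg a)]
    have h3 : 1 + m ≤ (1 + 1 / a) * exp (a * m) := h2.trans (by gcongr)
    nlinarith [h3]
  calc m ^ (1 / 2 : ℝ) * q ^ m ≤ (1 + 1 / a) * exp (a * m) * q ^ m := by gcongr
    _ = 1 + 1 / a := by
        rw [rpow_def_of_pos hq0, mul_assoc, ← exp_add]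
        simp [a]

lemma cConst_mul_ascPochhammer_eq {ℓ m : ℝ} {n j : ℕ} (hn : 2 * m = n) (hℓ : ℓ = m + j + 1 / 2)
    (hm : 0 ≤ m) :
    cConst ℓ m * ((ascPochhammer ℝ j).eval (m + 1) / j.factorial) =
      √(ℓ * (j + n).descFactorial n) / (2 ^ m * Gamma (m + 1)) := by
  have hΓ1 : Gamma (ℓ - m + 1 / 2) = j.factorial := by
    rw [← Gamma_nat_eq_factorial, hℓ]; ring_nf
  have hΓ2 : Gamma (ℓ + m + 1 / 2) = j.factorial * (j + n).descFactorial n := by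
    have h := Nat.factorial_mul_descFactorial (Nat.le_add_left n j)
    rw [Nat.add_sub_cancel] at h
    rw [← Nat.cast_mul, h, ← Gamma_nat_eq_factorial, hℓ]
    congr 1
    push_cast
    linear_combination hn
  have hΓ3 : Gamma (ℓ + 1 / 2) = Gamma (m + 1) * (ascPochhammer ℝ j).eval (m + 1) := by
    rw [← Gamma_add_nat _ (by positivity), hℓ]; ring_nf
  have hasc : 0 < (ascPochhammer ℝ j).eval (m + 1) := ascPochhammer_pos j _ (by positivity)
  have hfac : (0 : ℝ) < j.factorial := by positivity
  have hsqrt : √(ℓ * Gamma (ℓ - m + 1 / 2) * Gamma (ℓ + m + 1 / 2)) =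
      j.factorial * √(ℓ * (j + n).descFactorial n) := by
    rw [hΓ1, hΓ2, show ℓ * j.factorial * (j.factorial * ((j + n).descFactorial n : ℝ)) =
      (j.factorial : ℝ) ^ 2 * (ℓ * (j + n).descFactorial n) by ring, sqrt_mul (by positivity),
      sqrt_sq hfac.le]
  rw [cConst, hsqrt, hΓ3]
  field_simp

lemma sqrt_mul_div_two_rpow_mul_Gamma_le {ℓ m s N C : ℝ} (hℓ : 0 < ℓ) (hm : 0 < m) (hs : 0 < s)
    (hN : N ≤ (s * ℓ) ^ (2 * m)) (hC : m ^ (1 / 2 : ℝ) * (s / 2) ^ m ≤ C)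
    (hΓ : m ^ m ≤ exp m * Gamma (m + 1)) :
    √(ℓ * N) / (2 ^ m * Gamma (m + 1)) ≤ C * (m / ℓ) ^ (-(m + 1 / 2)) * exp 1 ^ m := by
  have hGamma : 0 < Gamma (m + 1) := Gamma_pos_of_pos (by linarith)
  have hsqrt : √(ℓ * N) ≤ ℓ ^ (1 / 2 : ℝ) * (s * ℓ) ^ m := by
    calc √(ℓ * N) ≤ √(ℓ * (s * ℓ) ^ (2 * m)) := sqrt_le_sqrt (by gcongr)
      _ = ℓ ^ (1 / 2 : ℝ) * (s * ℓ) ^ m := by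
        rw [sqrt_eq_rpow, mul_rpow hℓ.le (by positivity), ← rpow_mul (by positivity)]
        ring_nf
  have hrhs : C * (m / ℓ) ^ (-(m + 1 / 2)) * exp 1 ^ m =
      C * (ℓ ^ (1 / 2 : ℝ) * ℓ ^ m) * exp m / (m ^ m * m ^ (1 / 2 : ℝ)) := by
    rw [rpow_neg (by positivity), ← inv_rpow (by positivity), inv_div, div_rpow hℓ.le hm.le,
      rpow_add hℓ, rpow_add hm, exp_one_rpow]
    ring
  have hlhs : ℓ ^ (1 / 2 : ℝ) * (s * ℓ) ^ m / (2 ^ m * Gamma (m + 1)) =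
      (ℓ ^ (1 / 2 : ℝ) * ℓ ^ m) * (s / 2) ^ m / Gamma (m + 1) := by
    rw [mul_rpow hs.le hℓ.le, div_rpow hs.le zero_le_two]
    field_simp
  rw [hrhs]
  calc √(ℓ * N) / (2 ^ m * Gamma (m + 1))
      ≤ ℓ ^ (1 / 2 : ℝ) * (s * ℓ) ^ m / (2 ^ m * Gamma (m + 1)) := by gcongr
    _ = (ℓ ^ (1 / 2 : ℝ) * ℓ ^ m) * (s / 2) ^ m / Gamma (m + 1) := hlhs
    _ ≤ C * (ℓ ^ (1 / 2 : ℝ) * ℓ ^ m) * exp m / (m ^ m * m ^ (1 / 2 : ℝ)) := by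
      rw [div_le_div_iff₀ hGamma (by positivity)]
      calc ℓ ^ (1 / 2 : ℝ) * ℓ ^ m * (s / 2) ^ m * (m ^ m * m ^ (1 / 2 : ℝ))
          = (ℓ ^ (1 / 2 : ℝ) * ℓ ^ m) * ((m ^ (1 / 2 : ℝ) * (s / 2) ^ m) * m ^ m) := by ring
        _ ≤ (ℓ ^ (1 / 2 : ℝ) * ℓ ^ m) * (C * (exp m * Gamma (m + 1))) := by
          gcongr
          exact (mul_nonneg (by positivity) (by positivity)).trans hC
        _ = C * (ℓ ^ (1 / 2 : ℝ) * ℓ ^ m) * exp m * Gamma (m + 1) := by ring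

lemma abs_Yfun_le {ℓ m x : ℝ} {j : ℕ} (hj : ℓ - m - 1 / 2 = j) (hm : 0 < m)
    (hx : x ∈ Icc (-1 : ℝ) 1) :
    |Yfun ℓ m x| ≤
      cConst ℓ m * ((ascPochhammer ℝ j).eval (m + 1) / j.factorial) * (1 - x ^ 2) ^ (m / 2) := by
  have hc : 0 ≤ cConst ℓ m :=
    div_nonneg (sqrt_nonneg _) (mul_nonneg (by positivity) (Gamma_pos_of_pos (by linarith)).le)
  have hx2 : 0 ≤ 1 - x ^ 2 := by nlinarith [hx.1, hx.2]
  rw [Yfun, hj, Nat.floor_natCast, abs_mul, abs_mul, abs_of_nonneg hc,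
    abs_of_nonneg (rpow_nonneg hx2 _)]
  rcases hx2.eq_or_lt with hx2 | hx2
  · simp [← hx2, zero_rpow (by positivity : m / 2 ≠ 0)]
  have hxIoo : x ∈ Ioo (-1 : ℝ) 1 := ⟨by nlinarith, by nlinarith⟩
  have := abs_jacobiP_le (α := m) (by linarith) j hxIoo
  calc cConst ℓ m * (1 - x ^ 2) ^ (m / 2) * |jacobiP j m x|
      ≤ cConst ℓ m * (1 - x ^ 2) ^ (m / 2) * ((ascPochhammer ℝ j).eval (m + 1) / j.factorial) := by
        gcongr
    _ = _ := by ring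

theorem stmt7 (ε : ℝ) (hε : ε ∈ Set.Ioo (0:ℝ) 1) :
    ∃ C : ℝ, 0 < C ∧ ∀ ℓ m : ℝ, memI ℓ m → 0 < m → m ≤ ε * ℓ →
      ∀ x ∈ Set.Icc (-1:ℝ) 1,
        |Yfun ℓ m x| ≤ C * bPt ℓ m ^ (-(m + 1/2)) *
          (Real.sqrt (1 - x ^ 2) * Real.exp 1) ^ m := by
  obtain ⟨C, hC, hCm⟩ := exists_rpow_half_mul_rpow_le (q := (1 + ε) / 2) (by linarith [hε.1])
    (by linarith [hε.2])
  refine ⟨C, hC, ?_⟩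
  rintro ℓ m ⟨⟨n, hn⟩, j, hj⟩ hm hmε x hx
  have hℓ : ℓ = m + j + 1 / 2 := by linarith
  have hℓ0 : 0 < ℓ := by rw [hℓ]; positivity
  have hN : ((j + n).descFactorial n : ℝ) ≤ ((1 + ε) * ℓ) ^ (2 * m) := by
    rw [show 2 * m = (n : ℝ) by rw [hn]; ring, rpow_natCast]
    calc ((j + n).descFactorial n : ℝ) ≤ ((j + n : ℕ) : ℝ) ^ n := by
          exact_mod_cast Nat.descFactorial_le_pow _ _
      _ ≤ ((1 + ε) * ℓ) ^ n := by gcongr; push_cast; linarith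
  have hbound := sqrt_mul_div_two_rpow_mul_Gamma_le hℓ0 hm (by linarith [hε.1]) hN (hCm m hm.le)
    (hn ▸ half_rpow_self_le_exp_mul_Gamma n)
  rw [← cConst_mul_ascPochhammer_eq (by rw [hn]; ring) hℓ hm.le] at hbound
  have hx2 : 0 ≤ 1 - x ^ 2 := by nlinarith [hx.1, hx.2]
  calc |Yfun ℓ m x| ≤ _ := abs_Yfun_le hj hm hx
    _ ≤ C * (m / ℓ) ^ (-(m + 1 / 2)) * exp 1 ^ m * (1 - x ^ 2) ^ (m / 2) := by gcongr
    _ = _ := by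
      rw [bPt, mul_rpow (sqrt_nonneg _) (exp_pos 1).le, sqrt_eq_rpow, ← rpow_mul hx2]
      ring_nf
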